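/- Assume Hypothesis 1 and that the quotient structure D₁ is a symmetric 1-design with k₁ = v₁ − 1. Then v₀ = k₀², v₁ = k₀ + 2, v = k₀²(k₀+2), k = k₀(k₀+1), r = (k₀+1)λ, b = k₀(k₀+2)λ, and for D₀ one has λ₀ = λ/μ, r₀ = (k₀+1)λ/μ, b₀ = k₀(k₀+1)λ/μ. In particular λ ≥ k₀, and λ = k₀ if and only if D is a symmetric 2-design (v = b, equivalently r = k). -/

import Mathlib

open Finset

namespace FlagTransitivePaper

/-- A nontrivial 2-design `D` (point set `P`, blocks indexed by `ι`, the block `i`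
having point set `blk i`) with parameters `(v, k, λ)`, replication number `r` and `b`
blocks, together with a group `G` acting on points and blocks as a flag-transitive
automorphism group of `D`, preserving a nontrivial partition `Σ` of `P` into `v₁`
classes of size `v₀`; the partition is encoded by the class map `proj : P → Q`, where
`Q` is the set of classes.  The structure also records the Camina–Zieschang data:
the constant `k₀` (every block meets every class in `0` or `k₀` points), `k₁ = k/k₀`
(the constant number of classes met by a block, i.e. the size of the trace of a
block on `Σ`), the constant `μ` (the number of blocks inducing a given nonempty
trace on a given class) and the constant `η` (the number of blocks having a given
trace on `Σ`), as well as the parameters `λ₁` and `r₁` of the quotient structure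
`D₁` (these are constrained only via `Hyp32`, i.e. when `D₁` is a 2-design). -/
structure Setting (P ι Q G : Type*) [Fintype P] [DecidableEq P] [Fintype ι]
    [Fintype Q] [DecidableEq Q] [Group G] [MulAction G P] [MulAction G ι]
    [MulAction G Q] where
  /-- the set of points of a block -/
  blk : ι → Finset P
  /-- the map sending a point to its class in the partition `Σ` -/
  proj : P → Q
  v : ℕ
  k : ℕ
  lam : ℕ
  r : ℕ
  b : ℕ
  v₀ : ℕ
  v₁ : ℕ
  k₀ : ℕ
  k₁ : ℕ
  μ : ℕ
  η : ℕ
  lam₁ : ℕ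
  r₁ : ℕ
  card_points : Fintype.card P = v
  card_blocks : Fintype.card ι = b
  two_lt_k : 2 < k
  k_lt_v : k < v
  blk_card : ∀ i : ι, (blk i).card = k
  pair_count : ∀ x y : P, x ≠ y →
    (univ.filter fun i : ι => x ∈ blk i ∧ y ∈ blk i).card = lam
  rep_count : ∀ x : P, (univ.filter fun i : ι => x ∈ blk i).card = r
  smul_blk : ∀ (g : G) (i : ι), blk (g • i) = (blk i).image fun x => g • x
  flag_trans : ∀ (x : P) (i : ι), x ∈ blk i → ∀ (y : P) (j : ι), y ∈ blk j →
    ∃ g : G, g • x = y ∧ g • i = j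
  proj_equivariant : ∀ (g : G) (x : P), proj (g • x) = g • proj x
  fiber_card : ∀ q : Q, (univ.filter fun x : P => proj x = q).card = v₀
  card_classes : Fintype.card Q = v₁
  one_lt_v₀ : 1 < v₀
  one_lt_v₁ : 1 < v₁
  two_le_k₀ : 2 ≤ k₀
  k₀_mul_k₁ : k₀ * k₁ = k
  blk_fiber_card : ∀ (i : ι) (q : Q),
    ((blk i).filter fun x => proj x = q).card = 0 ∨
      ((blk i).filter fun x => proj x = q).card = k₀
  trace_card : ∀ i : ι,
    (univ.filter fun q : Q => ((blk i).filter fun x => proj x = q).Nonempty).card = k₁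
  mu_count : ∀ (i : ι) (q : Q), ((blk i).filter fun x => proj x = q).Nonempty →
    (univ.filter fun j : ι =>
      (blk j).filter (fun x => proj x = q) = (blk i).filter fun x => proj x = q).card = μ
  eta_count : ∀ i : ι,
    (univ.filter fun j : ι =>
      (univ.filter fun q : Q => ((blk j).filter fun x => proj x = q).Nonempty) =
        univ.filter fun q : Q => ((blk i).filter fun x => proj x = q).Nonempty).card = η

variable {P ι Q G : Type*} [Fintype P] [DecidableEq P] [Fintype ι] [Fintype Q]
  [DecidableEq Q] [Group G] [MulAction G P] [MulAction G ι] [MulAction G Q]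

namespace Setting

variable (S : Setting P ι Q G)

/-- The trace of the block `i` on the class `q`, i.e. `B ∩ Δ`. -/
def fiberTrace (i : ι) (q : Q) : Finset P := (S.blk i).filter fun x => S.proj x = q

/-- The trace of the block `i` on `Σ`: the set of classes met by the block. -/
def trace (i : ι) : Finset Q := univ.filter fun q : Q => (S.fiberTrace i q).Nonempty

/-- `A = gcd (k₁ − 1, v₁ − 1)`. -/
def A : ℕ := Nat.gcd (S.k₁ - 1) (S.v₁ - 1)

/-- `η₀ = gcd (η, v₀ / k₀)`. -/
def η₀ : ℕ := Nat.gcd S.η (S.v₀ / S.k₀)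

/-- `η₁ = η / η₀`. -/
def η₁ : ℕ := S.η / S.η₀

/-- `r₁' = (v₀ / (k₀ η₀)) · ((v₀ − 1)/(k₀ − 1))`. -/
def r₁' : ℕ := S.v₀ / (S.k₀ * S.η₀) * ((S.v₀ - 1) / (S.k₀ - 1))

/-- **Hypothesis 1**: `λ` is a prime dividing `r`, `v ≤ 2λ²(λ−1)`, and the
partition `Σ` is minimal (w.r.t. refinement) among the nontrivial `G`-invariant
partitions of the point set. -/
def Hyp1 : Prop :=
  S.lam.Prime ∧ S.lam ∣ S.r ∧ S.v ≤ 2 * S.lam ^ 2 * (S.lam - 1) ∧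
    ∀ s : Setoid P,
      (∀ (g : G) (x y : P), s.r x y → s.r (g • x) (g • y)) →
      (∀ x y : P, s.r x y → S.proj x = S.proj y) →
      (∃ x y : P, x ≠ y ∧ s.r x y) →
      ∀ x y : P, s.r x y ↔ S.proj x = S.proj y

/-- The quotient structure `D₁` is a 2-design with parameters `(v₁, k₁, λ₁)`,
where `λ₁ = v₀²λ/(k₀²η)`, with replication number `r₁ = (v₁−1)λ₁/(k₁−1)`:
any two distinct classes are met simultaneously by exactly `λ₁ · η` blocks. -/
def QuotientTwoDesign : Prop :=
  (∀ q q' : Q, q ≠ q' →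
    (univ.filter fun i : ι => q ∈ S.trace i ∧ q' ∈ S.trace i).card = S.lam₁ * S.η) ∧
  S.lam₁ * (S.k₀ ^ 2 * S.η) = S.v₀ ^ 2 * S.lam ∧
  S.r₁ * (S.k₁ - 1) = S.lam₁ * (S.v₁ - 1)

/-- The quotient structure `D₁` is a symmetric 1-design with `k₁ = v₁ − 1`
(in particular it has exactly `v₁` distinct blocks, namely the distinct traces). -/
def QuotientSymm1Design : Prop :=
  S.k₁ = S.v₁ - 1 ∧ (univ.image fun i : ι => S.trace i).card = S.v₁

/-- **Hypothesis 3/2**: Hypothesis 1 holds and `D₁` is a 2-`(v₁, k₁, λ₁)` design,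
not a symmetric 1-design with `k₁ = v₁ − 1`. -/
def Hyp32 : Prop := S.Hyp1 ∧ S.QuotientTwoDesign ∧ ¬ S.QuotientSymm1Design

/-- **Hypothesis 2**: Hypothesis 3/2 holds, `r > k` and `λ > 3`. -/
def Hyp2 : Prop := S.Hyp32 ∧ S.k < S.r ∧ 3 < S.lam

/-- `D₁` is of type I: `k₁ = (k₁, v₁) · (k₁, r/λ) · λ`. -/
def TypeI : Prop := S.k₁ = Nat.gcd S.k₁ S.v₁ * Nat.gcd S.k₁ (S.r / S.lam) * S.lam

/-- `D₁` is of type II: `k₁ = (k₁, v₁) · (k₁, r/λ)`. -/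
def TypeII : Prop := S.k₁ = Nat.gcd S.k₁ S.v₁ * Nat.gcd S.k₁ (S.r / S.lam)

/-- `D₁` is of type Ia: type I, and `λ` divides none of `v₀(v₀−1)`, `v₁(v₁−1)`,
`v(v−1)`. -/
def TypeIa : Prop :=
  S.TypeI ∧ ¬ S.lam ∣ S.v₀ * (S.v₀ - 1) ∧ ¬ S.lam ∣ S.v₁ * (S.v₁ - 1) ∧
    ¬ S.lam ∣ S.v * (S.v - 1)

/-- `D₁` is of type Ic: type I, and
`(v₀, k₀, v₁, k₁) = ((λ²+λ+2)/2, 2, (λ−1)(λ²−2)/2, λ²(λ−1)/4)`. -/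
def TypeIc : Prop :=
  S.TypeI ∧ S.k₀ = 2 ∧ 2 * S.v₀ = S.lam ^ 2 + S.lam + 2 ∧
    2 * S.v₁ = (S.lam - 1) * (S.lam ^ 2 - 2) ∧ 4 * S.k₁ = S.lam ^ 2 * (S.lam - 1)

/-- `D₁` is of type IIb: type II and `λ > v₀`. -/
def TypeIIb : Prop := S.TypeII ∧ S.v₀ < S.lam

/-- The permutation of the class `Δ = {x : P // proj x = q}` induced by an element
of the (setwise) stabiliser `G_Δ` of the class. -/
def classPerm (q : Q) (g : MulAction.stabilizer G q) :
    Equiv.Perm {x : P // S.proj x = q} where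
  toFun x := ⟨(g : G) • (x : P), by
    rw [S.proj_equivariant, x.2]
    exact MulAction.mem_stabilizer_iff.mp g.2⟩
  invFun x := ⟨(g : G)⁻¹ • (x : P), by
    rw [S.proj_equivariant, x.2, inv_smul_eq_iff]
    exact (MulAction.mem_stabilizer_iff.mp g.2).symm⟩
  left_inv x := Subtype.ext (inv_smul_smul _ _)
  right_inv x := Subtype.ext (smul_inv_smul _ _)

/-- The natural homomorphism from the stabiliser `G_Δ` of a class `Δ` of `Σ` to the
symmetric group on `Δ`; its range is the induced group `G_Δ^Δ`. -/
def classHom (q : Q) :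
    MulAction.stabilizer G q →* Equiv.Perm {x : P // S.proj x = q} where
  toFun := S.classPerm q
  map_one' := by
    apply Equiv.ext
    intro x
    apply Subtype.ext
    show ((1 : MulAction.stabilizer G q) : G) • (x : P) = (x : P)
    simp
  map_mul' g h := by
    apply Equiv.ext
    intro x
    apply Subtype.ext
    show ((g * h : MulAction.stabilizer G q) : G) • (x : P) =
      (g : G) • ((h : G) • (x : P))
    simp [mul_smul]

end Setting

/-!
Fix a point `x` and a class `Δ ≠ Δ_x`. Counting flags `(B, y)` with `x ∈ B` and `y ∈ B ∩ Δ`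
shows that the number `m` of blocks through `x` missing `Δ` satisfies `k₀ m + v₀ λ = k₀ r`,
so it does not depend on `Δ`. When `k₁ = v₁ - 1` every block misses exactly one class, hence
`r = (v₁ - 1) m`. Together with `r (k₀ - 1) = λ (v₀ - 1)` and `r = λ s` this gives
`(v₁ - 1 - k₀) s = v₁ - 1` and `(v₁ - 1 - k₀) m = λ`; as `λ` is prime and Fisher's inequality
gives `k ≤ r`, the only possibility is `v₁ - 1 - k₀ = 1`, which pins down all parameters.
The parameters of `D₀` follow because the blocks inducing a given trace on a class come in
groups of exactly `μ`.
-/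

theorem linearIndependent_of_dotProduct_eq_add_ite {K n m : Type*} [Field K] [LinearOrder K]
    [IsStrictOrderedRing K] [Fintype n] [Fintype m] [DecidableEq n] (f : n → m → K)
    {a c : K} (ha : 0 < a) (hc : 0 ≤ c) (hf : ∀ x y, f x ⬝ᵥ f y = c + if x = y then a else 0) :
    LinearIndependent K f := by
  rw [Fintype.linearIndependent_iff]
  intro g hg
  have hy : ∀ y, c * ∑ x, g x + a * g y = 0 := fun y => by
    have := congrArg (· ⬝ᵥ f y) hg
    simpa [sum_dotProduct, smul_dotProduct, hf, mul_add, sum_add_distrib,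
      mul_sum, mul_comm, mul_left_comm] using this
  have hsum : ∑ x, g x = 0 := by
    have h := sum_congr rfl fun y (_ : y ∈ (univ : Finset n)) => hy y
    rw [sum_add_distrib, ← mul_sum, ← mul_sum, sum_const,
      nsmul_eq_mul, card_univ, sum_const_zero] at h
    have hpos : 0 < (Fintype.card n : K) * c + a := by positivity
    have h' : (∑ x, g x) * ((Fintype.card n : K) * c + a) = 0 := by linear_combination h
    exact (mul_eq_zero.mp h').resolve_right hpos.ne'
  intro y
  simpa [hsum, ha.ne'] using hy y

/-- Fisher's inequality. -/
theorem card_le_card_of_pair_count {P ι : Type*} [Fintype P] [DecidableEq P] [Fintype ι]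
    (blk : ι → Finset P) {r lam : ℕ}
    (hrep : ∀ x, #{i | x ∈ blk i} = r)
    (hpair : ∀ x y, x ≠ y → #{i | x ∈ blk i ∧ y ∈ blk i} = lam) (hlr : lam < r) :
    Fintype.card P ≤ Fintype.card ι := by
  let f : P → ι → ℚ := fun x i => if x ∈ blk i then 1 else 0
  have hf : ∀ x y, f x ⬝ᵥ f y = lam + if x = y then ((r - lam : ℕ) : ℚ) else 0 := by
    intro x y
    have : f x ⬝ᵥ f y = #{i | x ∈ blk i ∧ y ∈ blk i} := by
      rw [card_filter, Nat.cast_sum]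
      refine sum_congr rfl fun i _ => ?_
      by_cases hx : x ∈ blk i <;> by_cases hy : y ∈ blk i <;> simp [f, hx, hy]
    rcases eq_or_ne x y with rfl | hxy
    · simp [this, hrep, Nat.cast_sub hlr.le]
    · simp [this, hpair x y hxy, hxy]
  have := (linearIndependent_of_dotProduct_eq_add_ite f (by exact_mod_cast Nat.sub_pos_of_lt hlr)
    (Nat.cast_nonneg _) hf).fintype_card_le_finrank
  simpa using this

theorem sum_card_inter_eq_sum_card_filter {α β : Type*} [DecidableEq α] (s : Finset β)
    (f : β → Finset α) (T : Finset α) :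
    ∑ i ∈ s, #(f i ∩ T) = ∑ y ∈ T, #{i ∈ s | y ∈ f i} := by
  simpa [bipartiteAbove, bipartiteBelow, filter_mem_eq_inter, inter_comm] using
    sum_card_bipartiteAbove_eq_sum_card_bipartiteBelow (s := s) (t := T) (r := fun i y => y ∈ f i)

theorem parameters_of_counting_identities {k₀ v₀ n lam s m : ℕ} (hk₀ : 2 ≤ k₀) (hn : 0 < n)
    (hp : lam.Prime) (hv₀ : lam * s * (k₀ - 1) = lam * (v₀ - 1))
    (hm : k₀ * m + v₀ * lam = k₀ * (lam * s)) (hr : lam * s = n * m)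
    (hk : k₀ * n ≤ lam * s) :
    v₀ = k₀ ^ 2 ∧ n = k₀ + 1 ∧ s = k₀ + 1 ∧ k₀ ≤ lam := by
  have hlam := hp.pos
  have hs : 0 < s := Nat.pos_of_ne_zero (by rintro rfl; nlinarith)
  obtain ⟨c, rfl⟩ : ∃ c, k₀ = c + 1 := ⟨k₀ - 1, by omega⟩
  have hsc : s * c = v₀ - 1 := Nat.eq_of_mul_eq_mul_left hlam (by simpa [mul_assoc] using hv₀)
  have hv : v₀ = s * c + 1 := by have := Nat.mul_pos hs (show 0 < c by omega); omega
  subst hv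
  have hm' : (c + 1) * m + lam = lam * s := by nlinarith
  have key : (c + 1) * s + n = n * s := by
    refine Nat.eq_of_mul_eq_mul_left hlam ?_
    zify at hm' hr ⊢
    linear_combination (c + 1 : ℤ) * hr + n * hm'
  obtain ⟨d, rfl⟩ : ∃ d, n = c + 1 + d := ⟨n - (c + 1), by
    by_contra! h; nlinarith [Nat.mul_le_mul_right s (show n ≤ c + 1 by omega)]⟩
  have hds : d * s = c + 1 + d := by linarith
  have hdm : lam = d * m := Nat.eq_of_mul_eq_mul_left hs (by rw [mul_comm s, hr]; nlinarith)
  -- `d = lam` would force `m = 1`, i.e. `lam * s = n < k₀ * n`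
  rcases hp.eq_one_or_self_of_dvd d ⟨m, hdm⟩ with rfl | rfl
  · have hs' : s = c + 2 := by omega
    subst hs'
    refine ⟨by ring, by ring, rfl, ?_⟩
    nlinarith
  · have hm1 : m = 1 := by nlinarith
    subst hm1
    nlinarith

namespace Setting

variable (S : Setting P ι Q G)

def fiber (q : Q) : Finset P := univ.filter fun x => S.proj x = q

def blocksThrough (x : P) : Finset ι := univ.filter fun i => x ∈ S.blk i

variable {S}

@[simp]
theorem mem_fiber {x : P} {q : Q} : x ∈ S.fiber q ↔ S.proj x = q := by simp [fiber]

@[simp]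
theorem mem_blocksThrough {x : P} {i : ι} : i ∈ S.blocksThrough x ↔ x ∈ S.blk i := by
  simp [blocksThrough]

@[simp]
theorem mem_fiberTrace {x : P} {i : ι} {q : Q} :
    x ∈ S.fiberTrace i q ↔ x ∈ S.blk i ∧ S.proj x = q := by
  simp [fiberTrace]

variable (S)

theorem card_fiber (q : Q) : #(S.fiber q) = S.v₀ := S.fiber_card q

theorem card_blocksThrough (x : P) : #(S.blocksThrough x) = S.r := S.rep_count x

theorem inter_fiber (i : ι) (q : Q) : S.blk i ∩ S.fiber q = S.fiberTrace i q := by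
  ext; simp

theorem card_fiberTrace_of_nonempty {i : ι} {q : Q} (h : (S.fiberTrace i q).Nonempty) :
    #(S.fiberTrace i q) = S.k₀ :=
  (S.blk_fiber_card i q).resolve_left (card_pos.mpr h).ne'

theorem sum_card_fiberTrace (I : Finset ι) (q : Q) :
    ∑ i ∈ I, #(S.fiberTrace i q) = S.k₀ * #{i ∈ I | (S.fiberTrace i q).Nonempty} := by
  rw [← sum_filter_of_ne fun i _ h => card_pos.mp (Nat.pos_of_ne_zero h),
    sum_congr rfl fun i hi => S.card_fiberTrace_of_nonempty (mem_filter.mp hi).2,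
    sum_const, smul_eq_mul, mul_comm]

theorem sum_card_inter_eq_lam_mul {x : P} {T : Finset P} (hx : x ∉ T) :
    ∑ i ∈ S.blocksThrough x, #(S.blk i ∩ T) = S.lam * #T := by
  rw [sum_card_inter_eq_sum_card_filter, sum_congr rfl fun y hy => ?_, sum_const, smul_eq_mul,
    mul_comm]
  rw [← S.pair_count x y (ne_of_mem_of_not_mem hy hx).symm, blocksThrough, filter_filter]

theorem sum_card_inter_eq_r_mul (T : Finset P) : ∑ i, #(S.blk i ∩ T) = S.r * #T := by
  rw [sum_card_inter_eq_sum_card_filter, sum_congr rfl fun y _ => S.rep_count y, sum_const,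
    smul_eq_mul, mul_comm]

theorem v_eq_v₀_mul_v₁ : S.v = S.v₀ * S.v₁ := by
  rw [← S.card_points, ← card_univ, card_eq_sum_card_fiberwise fun x _ => mem_univ (S.proj x)]
  simp [S.fiber_card, S.card_classes, mul_comm]

theorem b_mul_k : S.b * S.k = S.v * S.r := by
  have := S.sum_card_inter_eq_r_mul univ
  simp only [inter_univ, S.blk_card, sum_const, card_univ, S.card_blocks, S.card_points,
    smul_eq_mul] at this
  rw [this, mul_comm]

theorem r_mul_k_sub_one (x : P) : S.r * (S.k - 1) = S.lam * (S.v - 1) := by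
  have := S.sum_card_inter_eq_lam_mul (notMem_erase x univ)
  rw [sum_congr rfl fun i hi => by
    rw [inter_erase, inter_univ, card_erase_of_mem (mem_blocksThrough.mp hi), S.blk_card]] at this
  rwa [sum_const, smul_eq_mul, S.card_blocksThrough, card_erase_of_mem (mem_univ x), card_univ,
    S.card_points] at this

theorem r_mul_k₀_sub_one (x : P) : S.r * (S.k₀ - 1) = S.lam * (S.v₀ - 1) := by
  have := S.sum_card_inter_eq_lam_mul (notMem_erase x (S.fiber (S.proj x)))
  rw [sum_congr rfl fun i hi => by
    have hx : x ∈ S.fiberTrace i (S.proj x) := mem_fiberTrace.mpr ⟨mem_blocksThrough.mp hi, rfl⟩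
    rw [inter_erase, S.inter_fiber, card_erase_of_mem hx, S.card_fiberTrace_of_nonempty ⟨x, hx⟩]]
    at this
  rwa [sum_const, smul_eq_mul, S.card_blocksThrough,
    card_erase_of_mem (mem_fiber.mpr rfl), S.card_fiber] at this

theorem k₀_mul_card_meeting {x : P} {q : Q} (hq : q ≠ S.proj x) :
    S.k₀ * #{i ∈ S.blocksThrough x | (S.fiberTrace i q).Nonempty} = S.v₀ * S.lam := by
  have := S.sum_card_inter_eq_lam_mul (T := S.fiber q) (x := x) (by simpa using hq.symm)
  simp only [S.inter_fiber, S.sum_card_fiberTrace, S.card_fiber] at this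
  rw [this, mul_comm]

theorem k₀_mul_card_meeting_univ (q : Q) :
    S.k₀ * #{i | (S.fiberTrace i q).Nonempty} = S.v₀ * S.r := by
  have := S.sum_card_inter_eq_r_mul (S.fiber q)
  simp only [S.inter_fiber, S.sum_card_fiberTrace, S.card_fiber] at this
  rw [this, mul_comm]

theorem nonempty_points (S : Setting P ι Q G) : Nonempty P :=
  Fintype.card_pos_iff.mp (by have := S.k_lt_v; rw [S.card_points]; omega)

theorem lam_lt_r (hlam : 0 < S.lam) : S.lam < S.r := by
  obtain ⟨x⟩ := S.nonempty_points
  have := S.r_mul_k_sub_one x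
  have := S.k_lt_v
  have := S.two_lt_k
  by_contra! h
  have : S.r * (S.k - 1) < S.lam * (S.v - 1) :=
    Nat.mul_lt_mul_of_le_of_lt h (by omega) hlam
  omega

theorem v_le_b (hlam : 0 < S.lam) : S.v ≤ S.b := by
  rw [← S.card_points, ← S.card_blocks]
  exact card_le_card_of_pair_count S.blk S.rep_count S.pair_count (S.lam_lt_r hlam)

theorem k_le_r (hlam : 0 < S.lam) : S.k ≤ S.r := by
  have hv : 0 < S.v := by have := S.k_lt_v; omega
  refine Nat.le_of_mul_le_mul_left ?_ hv
  rw [← S.b_mul_k]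
  exact Nat.mul_le_mul_right _ (S.v_le_b hlam)

theorem k₀_mul_card_missing_add {x : P} {q : Q} (hq : q ≠ S.proj x) :
    S.k₀ * #{i ∈ S.blocksThrough x | ¬(S.fiberTrace i q).Nonempty} + S.v₀ * S.lam =
      S.k₀ * S.r := by
  rw [← S.k₀_mul_card_meeting hq, ← mul_add, add_comm, card_filter_add_card_filter_not,
    S.card_blocksThrough]

theorem sum_card_missing (hk₁ : S.k₁ = S.v₁ - 1) (x : P) :
    ∑ q, #{i ∈ S.blocksThrough x | ¬(S.fiberTrace i q).Nonempty} = S.r := by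
  have hmiss : ∀ i, #{q | ¬(S.fiberTrace i q).Nonempty} = 1 := fun i => by
    have := card_filter_add_card_filter_not (s := univ)
      (fun q => (S.fiberTrace i q).Nonempty)
    have htrace : #{q | (S.fiberTrace i q).Nonempty} = S.k₁ := S.trace_card i
    rw [htrace, card_univ, S.card_classes] at this
    have := S.one_lt_v₁
    omega
  have := sum_card_bipartiteAbove_eq_sum_card_bipartiteBelow (s := S.blocksThrough x)
    (t := univ) (r := fun i q => ¬(S.fiberTrace i q).Nonempty)
  simp only [bipartiteAbove, bipartiteBelow, hmiss, sum_const, smul_eq_mul, mul_one,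
    S.card_blocksThrough] at this
  exact this.symm

theorem r_eq_mul_card_missing (hk₁ : S.k₁ = S.v₁ - 1) {x : P} {q : Q} (hq : q ≠ S.proj x) :
    S.r = (S.v₁ - 1) * #{i ∈ S.blocksThrough x | ¬(S.fiberTrace i q).Nonempty} := by
  have hx : #{i ∈ S.blocksThrough x | ¬(S.fiberTrace i (S.proj x)).Nonempty} = 0 :=
    card_eq_zero.mpr <| filter_eq_empty_iff.mpr fun i hi =>
      not_not.mpr ⟨x, mem_fiberTrace.mpr ⟨mem_blocksThrough.mp hi, rfl⟩⟩
  have hk₀ : 0 < S.k₀ := by have := S.two_le_k₀; omega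
  have hconst : ∀ q' ∈ univ.erase (S.proj x),
      #{i ∈ S.blocksThrough x | ¬(S.fiberTrace i q').Nonempty} =
        #{i ∈ S.blocksThrough x | ¬(S.fiberTrace i q).Nonempty} := fun q' hq' =>
    Nat.eq_of_mul_eq_mul_left hk₀ <| Nat.add_right_cancel <|
      (S.k₀_mul_card_missing_add (ne_of_mem_erase hq')).trans (S.k₀_mul_card_missing_add hq).symm
  rw [← S.sum_card_missing hk₁ x, ← sum_erase (univ : Finset Q) hx, sum_congr rfl hconst,
    sum_const, smul_eq_mul, card_erase_of_mem (mem_univ _), card_univ, S.card_classes]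

theorem parameters_of_k₁_eq (hp : S.lam.Prime) (hdvd : S.lam ∣ S.r) (hk₁ : S.k₁ = S.v₁ - 1) :
    S.v₀ = S.k₀ ^ 2 ∧ S.v₁ = S.k₀ + 2 ∧ S.r = (S.k₀ + 1) * S.lam ∧ S.k₀ ≤ S.lam := by
  obtain ⟨s, hs⟩ := hdvd
  obtain ⟨x⟩ := S.nonempty_points
  have hv₁ := S.one_lt_v₁
  obtain ⟨q, hq⟩ := Fintype.exists_ne_of_one_lt_card (S.card_classes ▸ hv₁) (S.proj x)
  have hk : S.k₀ * (S.v₁ - 1) ≤ S.r := by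
    rw [← hk₁, S.k₀_mul_k₁]; exact S.k_le_r hp.pos
  rw [hs] at hk
  obtain ⟨hv₀, hn, hs', hk₀⟩ := parameters_of_counting_identities S.two_le_k₀
    (by omega) hp (hs ▸ S.r_mul_k₀_sub_one x) (hs ▸ S.k₀_mul_card_missing_add hq)
    (hs ▸ S.r_eq_mul_card_missing hk₁ hq) hk
  exact ⟨hv₀, by omega, by rw [hs, hs', mul_comm], hk₀⟩

theorem card_eq_μ_mul_card_image {q : Q} {F : Finset ι}
    (hne : ∀ i ∈ F, (S.fiberTrace i q).Nonempty)
    (hsat : ∀ i ∈ F, ∀ j, S.fiberTrace j q = S.fiberTrace i q → j ∈ F) :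
    #F = S.μ * #(F.image (S.fiberTrace · q)) := by
  rw [card_eq_sum_card_image (S.fiberTrace · q) F, mul_comm, ← smul_eq_mul, ← sum_const]
  refine sum_congr rfl fun C hC => ?_
  obtain ⟨i, hi, rfl⟩ := mem_image.mp hC
  rw [← S.mu_count i q (hne i hi)]
  congr 1
  ext j
  simp only [mem_filter, mem_univ, true_and]
  exact ⟨And.right, fun hj => ⟨hsat i hi j hj, hj⟩⟩

theorem mem_blk_of_fiberTrace_eq {i j : ι} {q : Q} {x : P}
    (hj : S.fiberTrace j q = S.fiberTrace i q) (hx : x ∈ S.blk i) (hxq : S.proj x = q) :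
    x ∈ S.blk j :=
  (mem_fiberTrace.mp (hj ▸ mem_fiberTrace.mpr ⟨hx, hxq⟩ : x ∈ S.fiberTrace j q)).1

theorem lam_eq_μ_mul_card_image {q : Q} {x y : P} (hx : S.proj x = q) (hy : S.proj y = q)
    (hxy : x ≠ y) :
    S.lam = S.μ * #((univ.filter fun i => x ∈ S.blk i ∧ y ∈ S.blk i).image
      (S.fiberTrace · q)) := by
  rw [← S.pair_count x y hxy]
  refine S.card_eq_μ_mul_card_image (fun i hi => ⟨x, by simp_all⟩) fun i hi j hj => ?_
  simp only [mem_filter, mem_univ, true_and] at hi ⊢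
  exact ⟨S.mem_blk_of_fiberTrace_eq hj hi.1 hx, S.mem_blk_of_fiberTrace_eq hj hi.2 hy⟩

theorem r_eq_μ_mul_card_image {q : Q} {x : P} (hx : S.proj x = q) :
    S.r = S.μ * #((S.blocksThrough x).image (S.fiberTrace · q)) := by
  rw [← S.card_blocksThrough x]
  exact S.card_eq_μ_mul_card_image (fun i hi => ⟨x, by simp_all⟩) fun i hi j hj =>
    mem_blocksThrough.mpr (S.mem_blk_of_fiberTrace_eq hj (mem_blocksThrough.mp hi) hx)

theorem card_meeting_eq_μ_mul_card_image (q : Q) :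
    #{i | (S.fiberTrace i q).Nonempty} =
      S.μ * #(({i | (S.fiberTrace i q).Nonempty} : Finset ι).image (S.fiberTrace · q)) :=
  S.card_eq_μ_mul_card_image (fun _ hi => (mem_filter.mp hi).2)
    fun i hi j hj => by simpa [hj] using hi

theorem μ_dvd_lam : S.μ ∣ S.lam := by
  obtain ⟨x⟩ := S.nonempty_points
  obtain ⟨y, hy, hxy⟩ := exists_mem_ne (S.card_fiber (S.proj x) ▸ S.one_lt_v₀) x
  exact ⟨_, S.lam_eq_μ_mul_card_image rfl (mem_fiber.mp hy) hxy.symm⟩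

end Setting

/-- Lemma 3.3 of the paper. Assume Hypothesis 1 and that the
quotient structure `D₁` is a symmetric 1-design with `k₁ = v₁ − 1`.  Then
`v₀ = k₀²`, `v₁ = k₀ + 2`, `v = k₀²(k₀+2)`, `k = k₀(k₀+1)`, `r = (k₀+1)λ`,
`b = k₀(k₀+2)λ`, and for `D₀` one has `λ₀ = λ/μ` (the number of distinct traces
through two distinct points of a class), `r₀ = (k₀+1)·λ/μ` (the number of distinct
traces through a point of a class) and `b₀ = k₀(k₀+1)·λ/μ` (the number of distinct
nonempty traces on a class).  In particular `λ ≥ k₀`, and `λ = k₀` iff `D` is a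
symmetric 2-design (`v = b`). -/
theorem statement_5 (S : Setting P ι Q G) (h : S.Hyp1)
    (hsym : S.QuotientSymm1Design) :
    S.v₀ = S.k₀ ^ 2 ∧ S.v₁ = S.k₀ + 2 ∧
    S.v = S.k₀ ^ 2 * (S.k₀ + 2) ∧ S.k = S.k₀ * (S.k₀ + 1) ∧
    S.r = (S.k₀ + 1) * S.lam ∧ S.b = S.k₀ * (S.k₀ + 2) * S.lam ∧
    S.μ ∣ S.lam ∧
    (∀ (q : Q) (x y : P), S.proj x = q → S.proj y = q → x ≠ y →
      ((univ.filter fun i : ι => x ∈ S.blk i ∧ y ∈ S.blk i).image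
        fun i => S.fiberTrace i q).card = S.lam / S.μ) ∧
    (∀ (q : Q) (x : P), S.proj x = q →
      ((univ.filter fun i : ι => x ∈ S.blk i).image
        fun i => S.fiberTrace i q).card = (S.k₀ + 1) * (S.lam / S.μ)) ∧
    (∀ q : Q,
      ((univ.filter fun i : ι => (S.fiberTrace i q).Nonempty).image
        fun i => S.fiberTrace i q).card = S.k₀ * (S.k₀ + 1) * (S.lam / S.μ)) ∧
    S.k₀ ≤ S.lam ∧ (S.lam = S.k₀ ↔ S.v = S.b) := by
  obtain ⟨hp, hdvd, -, -⟩ := h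
  obtain ⟨hv₀, hv₁, hr, hk₀⟩ := S.parameters_of_k₁_eq hp hdvd hsym.1
  have hk₀pos : 0 < S.k₀ := by have := S.two_le_k₀; omega
  have hv : S.v = S.k₀ ^ 2 * (S.k₀ + 2) := by rw [S.v_eq_v₀_mul_v₁, hv₀, hv₁]
  have hk : S.k = S.k₀ * (S.k₀ + 1) := by rw [← S.k₀_mul_k₁, hsym.1, hv₁]; rfl
  have hb : S.b = S.k₀ * (S.k₀ + 2) * S.lam := by
    refine Nat.eq_of_mul_eq_mul_right (show 0 < S.k by have := S.two_lt_k; omega) ?_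
    rw [S.b_mul_k, hv, hr, hk]; ring
  obtain ⟨N, hN⟩ := S.μ_dvd_lam
  have hμ : 0 < S.μ := Nat.pos_of_dvd_of_pos ⟨N, hN⟩ hp.pos
  have hdiv : S.lam / S.μ = N := by rw [hN, Nat.mul_div_cancel_left _ hμ]
  refine ⟨hv₀, hv₁, hv, hk, hr, hb, ⟨N, hN⟩, fun q x y hx hy hxy => ?_, fun q x hx => ?_,
    fun q => ?_, hk₀, ?_⟩
  · rw [hdiv]
    exact Nat.eq_of_mul_eq_mul_left hμ ((S.lam_eq_μ_mul_card_image hx hy hxy).symm.trans hN)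
  · rw [hdiv]
    refine Nat.eq_of_mul_eq_mul_left hμ ((S.r_eq_μ_mul_card_image hx).symm.trans ?_)
    rw [hr, hN]; ring
  · rw [hdiv]
    refine Nat.eq_of_mul_eq_mul_left (Nat.mul_pos hk₀pos hμ) ?_
    rw [mul_assoc, ← S.card_meeting_eq_μ_mul_card_image, S.k₀_mul_card_meeting_univ, hv₀, hr, hN]
    ring
  · rw [hv, hb, show S.k₀ ^ 2 * (S.k₀ + 2) = S.k₀ * (S.k₀ + 2) * S.k₀ by ring,
      Nat.mul_left_cancel_iff (by positivity), eq_comm]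

end FlagTransitivePaper
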